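/- Let ρ be a state on H^{⊗N_e} that is a mixture ∫ ρ_v^{⊗N_e} dμ(v) of product states, and let V(φ) = U(φ)^{⊗N_e} where U(φ) is a unitary whose eigenvalues lie in an arc of length δ ≤ π. Then D(ρ, V(φ) ρ V(φ)†) ≤ |sin(δ/2)|, where D is trace distance. -/

import Mathlib

open Matrix
open scoped ComplexOrder Kronecker

/-- Schatten 1-norm (trace norm) of a complex matrix: sum of its singular values. -/
noncomputable def traceNorm {ι : Type*} [Fintype ι] [DecidableEq ι]
    (M : Matrix ι ι ℂ) : ℝ :=
  ∑ i, Real.sqrt ((Matrix.posSemidef_conjTranspose_mul_self M).1.eigenvalues i)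

/-- Trace distance `D(A,B) = ‖A - B‖₁ / 2`. -/
noncomputable def traceDist {ι : Type*} [Fintype ι] [DecidableEq ι]
    (A B : Matrix ι ι ℂ) : ℝ :=
  traceNorm (A - B) / 2

/-- A quantum state: a positive semidefinite matrix of trace one. -/
def IsState {ι : Type*} [Fintype ι] [DecidableEq ι] (ρ : Matrix ι ι ℂ) : Prop :=
  ρ.PosSemidef ∧ ρ.trace = 1

/-- Operator norm (largest singular value) of a complex matrix. -/
noncomputable def opNorm {ι : Type*} [Fintype ι] [DecidableEq ι]
    (M : Matrix ι ι ℂ) : ℝ :=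
  ⨆ i, Real.sqrt ((Matrix.posSemidef_conjTranspose_mul_self M).1.eigenvalues i)

/-! With `S = sign (ρ - UρU†)`, a self-adjoint contraction, the trace norm of `ρ - UρU†` is
`tr (S (ρ - UρU†)) = tr ((S - U†SU) ρ) ≤ ‖S - U†SU‖`. Since `S - U†SU = U† [U - z, S]` for every
scalar `z`, this is at most `2 ‖U - z‖`. For `z = e^{iθ} cos (δ/2)`, with `θ` the midpoint of the
arc, normality of `U` gives `‖U - z‖ = max_{λ ∈ σ(U)} |λ - z| ≤ sin (δ/2)`. -/

open Complex in
theorem Complex.norm_exp_mul_I_sub_cos_le {α β : ℝ} (hα : |α| ≤ β) (hβ : β ≤ Real.pi / 2) :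
    ‖exp (α * I) - Real.cos β‖ ≤ Real.sin β := by
  have hβ0 : 0 ≤ β := (abs_nonneg α).trans hα
  have hcos : Real.cos β ≤ Real.cos α := by
    rw [← Real.cos_abs α]
    exact Real.cos_le_cos_of_nonneg_of_le_pi (abs_nonneg α) (by linarith [Real.pi_pos]) hα
  have hcosβ : 0 ≤ Real.cos β := Real.cos_nonneg_of_mem_Icc ⟨by linarith [Real.pi_pos], hβ⟩
  have hsinβ : 0 ≤ Real.sin β :=
    Real.sin_nonneg_of_nonneg_of_le_pi hβ0 (by linarith [Real.pi_pos])
  rw [← sq_le_sq₀ (norm_nonneg _) hsinβ, Complex.sq_norm, Complex.normSq_apply]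
  simp only [sub_re, sub_im, exp_ofReal_mul_I_re, exp_ofReal_mul_I_im, ofReal_re, ofReal_im,
    sub_zero]
  nlinarith [Real.sin_sq_add_cos_sq α, Real.sin_sq_add_cos_sq β,
    mul_le_mul_of_nonneg_left hcos hcosβ]

section CStarAlgebra

variable {A : Type*} [CStarAlgebra A]

theorem norm_sub_star_mul_mul_le {u : A} (hu : u ∈ unitary A) (a : A) (z : ℂ) :
    ‖a - star u * a * u‖ ≤ 2 * ‖a‖ * ‖u - algebraMap ℂ A z‖ := by
  nontriviality A
  have hcomm : (u - algebraMap ℂ A z) * a - a * (u - algebraMap ℂ A z) = u * a - a * u := by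
    rw [sub_mul, mul_sub, Algebra.commutes]
    abel
  have hconj : a - star u * a * u = star u * (u * a - a * u) := by
    simp only [mul_sub, ← mul_assoc, Unitary.star_mul_self_of_mem hu, one_mul]
  rw [hconj, ← hcomm, CStarRing.norm_mem_unitary_mul _ (Unitary.star_mem hu)]
  calc ‖(u - algebraMap ℂ A z) * a - a * (u - algebraMap ℂ A z)‖
      ≤ ‖u - algebraMap ℂ A z‖ * ‖a‖ + ‖a‖ * ‖u - algebraMap ℂ A z‖ :=
        (norm_sub_le _ _).trans (add_le_add (norm_mul_le _ _) (norm_mul_le _ _))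
    _ = 2 * ‖a‖ * ‖u - algebraMap ℂ A z‖ := by ring

theorem norm_sub_algebraMap_le_sin_of_spectrum_subset_arc {u : A} (hu : IsStarNormal u)
    {θ₀ δ : ℝ} (hδ0 : 0 ≤ δ) (hδπ : δ ≤ Real.pi)
    (hspec : ∀ z ∈ spectrum ℂ u, ∃ θ ∈ Set.Icc θ₀ (θ₀ + δ), z = Complex.exp (θ * Complex.I)) :
    ‖u - algebraMap ℂ A (Complex.exp ((θ₀ + δ / 2 : ℝ) * Complex.I) * Real.cos (δ / 2))‖
      ≤ Real.sin (δ / 2) := by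
  set w := Complex.exp ((θ₀ + δ / 2 : ℝ) * Complex.I) * Real.cos (δ / 2)
  have hsin : 0 ≤ Real.sin (δ / 2) :=
    Real.sin_nonneg_of_nonneg_of_le_pi (by linarith) (by linarith [Real.pi_pos])
  have hcfc : u - algebraMap ℂ A w = cfc (fun z => z - w) u := by
    rw [cfc_sub (fun z => z) (fun _ => w) u, cfc_id' ℂ u, cfc_const w u]
  rw [hcfc]
  refine norm_cfc_le hsin fun z hz => ?_
  obtain ⟨θ, ⟨hθ₀, hθ₁⟩, rfl⟩ := hspec z hz
  have hrot : Complex.exp (θ * Complex.I) - w = Complex.exp ((θ₀ + δ / 2 : ℝ) * Complex.I) *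
      (Complex.exp ((θ - (θ₀ + δ / 2) : ℝ) * Complex.I) - Real.cos (δ / 2)) := by
    rw [mul_sub, ← Complex.exp_add]
    congr 2
    push_cast
    ring
  rw [hrot, norm_mul, Complex.norm_exp_ofReal_mul_I, one_mul]
  exact Complex.norm_exp_mul_I_sub_cos_le (abs_le.mpr ⟨by linarith, by linarith⟩) (by linarith)

end CStarAlgebra

namespace Matrix

variable {n : Type*} [Fintype n] [DecidableEq n]

theorem IsHermitian.trace_cfc {𝕜 : Type*} [RCLike 𝕜] {A : Matrix n n 𝕜} (hA : A.IsHermitian)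
    (f : ℝ → ℝ) : (cfc f A).trace = ∑ i, (f (hA.eigenvalues i) : 𝕜) := by
  rw [hA.cfc_eq, IsHermitian.cfc, Unitary.conjStarAlgAut_apply, trace_mul_cycle,
    Unitary.coe_star_mul_self, one_mul, trace_diagonal]
  rfl

open scoped MatrixOrder

theorem cfc_sign_mul_self {𝕜 : Type*} [RCLike 𝕜] {A : Matrix n n 𝕜} (hA : IsSelfAdjoint A) :
    cfc Real.sign A * A = CFC.abs A := by
  have hcont (f : ℝ → ℝ) : ContinuousOn f (spectrum ℝ A) := A.finite_real_spectrum.continuousOn f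
  nth_rewrite 2 [← cfc_id' ℝ A]
  rw [← cfc_mul _ _ A (hcont _) (hcont _), CFC.abs_eq_cfc_norm A]
  refine cfc_congr fun x _ => ?_
  rcases lt_trichotomy x 0 with hx | rfl | hx
  · rw [Real.sign_of_neg hx, Real.norm_of_nonpos hx.le, neg_one_mul]
  · rw [mul_zero, norm_zero]
  · rw [Real.sign_of_pos hx, Real.norm_of_nonneg hx.le, one_mul]

open scoped Matrix.Norms.L2Operator in
theorem re_trace_mul_le_norm_mul {X ρ : Matrix n n ℂ} (hX : IsSelfAdjoint X)
    (hρ : ρ.PosSemidef) : (X * ρ).trace.re ≤ ‖X‖ * ρ.trace.re := by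
  set r := CFC.sqrt ρ
  have hr : IsSelfAdjoint r := (CFC.sqrt_nonneg ρ).isSelfAdjoint
  have hρr : ρ = r * r := (CFC.sqrt_mul_sqrt_self ρ hρ.nonneg).symm
  have hle : r * X * r ≤ ‖X‖ • ρ :=
    calc r * X * r ≤ r * algebraMap ℝ _ ‖X‖ * r :=
          hr.conjugate_le_conjugate hX.le_algebraMap_norm_self
      _ = ‖X‖ • ρ := by
          rw [Algebra.algebraMap_eq_smul_one, mul_smul_comm, mul_one, smul_mul_assoc, ← hρr]
  have htr : (X * ρ).trace = (r * X * r).trace := by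
    rw [hρr, ← mul_assoc, trace_mul_comm, mul_assoc]
  have hgap := (Complex.le_def.mp (le_iff.mp hle).trace_nonneg).1
  rw [trace_sub, trace_smul, Complex.sub_re, Complex.zero_re] at hgap
  rw [htr]
  simpa using hgap

end Matrix

open scoped MatrixOrder in
theorem traceNorm_eq_re_trace_abs {n : Type*} [Fintype n] [DecidableEq n] (M : Matrix n n ℂ) :
    traceNorm M = (CFC.abs M).trace.re := by
  rw [CFC.abs, CFC.sqrt_eq_real_sqrt _ (star_mul_self_nonneg M), cfcₙ_eq_cfc,
    star_eq_conjTranspose, (posSemidef_conjTranspose_mul_self M).1.trace_cfc, traceNorm,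
    Complex.re_sum]
  rfl

open scoped MatrixOrder Matrix.Norms.L2Operator in
theorem traceDist_conj_le_norm_sub_algebraMap {n : Type*} [Fintype n] [DecidableEq n]
    {U ρ : Matrix n n ℂ} (hU : U ∈ unitary (Matrix n n ℂ)) (hρ : IsState ρ) (z : ℂ) :
    traceDist ρ (U * ρ * Uᴴ) ≤ ‖U - algebraMap ℂ _ z‖ := by
  obtain ⟨hρ_psd, hρ_tr⟩ := hρ
  have hD : IsSelfAdjoint (ρ - U * ρ * Uᴴ) :=
    hρ_psd.isHermitian.isSelfAdjoint.sub (hρ_psd.isHermitian.isSelfAdjoint.conjugate U)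
  set S := cfc Real.sign (ρ - U * ρ * Uᴴ)
  have hS : ‖S‖ ≤ 1 := norm_cfc_le zero_le_one fun x _ => by
    rcases Real.sign_apply_eq x with h | h | h <;> simp [h]
  have hS_sa : IsSelfAdjoint (S - star U * S * U) := by
    have hS' : IsSelfAdjoint S := cfc_predicate _ _
    exact hS'.sub (hS'.conjugate' U)
  have hnorm : traceNorm (ρ - U * ρ * Uᴴ) = ((S - star U * S * U) * ρ).trace.re := by
    have hcycle : (S * (U * ρ * Uᴴ)).trace = (star U * S * U * ρ).trace := by
      rw [← mul_assoc, ← mul_assoc, trace_mul_comm, star_eq_conjTranspose]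
      simp only [mul_assoc]
    rw [traceNorm_eq_re_trace_abs, ← Matrix.cfc_sign_mul_self hD, mul_sub, trace_sub, hcycle,
      sub_mul, trace_sub]
  calc traceDist ρ (U * ρ * Uᴴ) = ((S - star U * S * U) * ρ).trace.re / 2 := by
        rw [traceDist, hnorm]
    _ ≤ ‖S - star U * S * U‖ * ρ.trace.re / 2 := by
        gcongr
        exact Matrix.re_trace_mul_le_norm_mul hS_sa hρ_psd
    _ ≤ 2 * 1 * ‖U - algebraMap ℂ _ z‖ * 1 / 2 := by
        rw [hρ_tr, Complex.one_re]
        gcongr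
        exact (norm_sub_star_mul_mul_le hU S z).trans (by gcongr)
    _ = ‖U - algebraMap ℂ _ z‖ := by ring

/-- Single-copy rotation bound: for a unitary `U` whose eigenvalues all lie in an arc
of length `δ ∈ [0, π]` of the unit circle, and any state `ρ`,
`D(ρ, UρU†) ≤ sin(δ/2)`. -/
theorem trace_distance_rotation_bound {d : ℕ}
    (U : Matrix (Fin d) (Fin d) ℂ) (hU : U ∈ Matrix.unitaryGroup (Fin d) ℂ)
    (δ θ₀ : ℝ) (hδ0 : 0 ≤ δ) (hδπ : δ ≤ Real.pi)
    (hspec : ∀ lam ∈ spectrum ℂ U,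
      ∃ θ ∈ Set.Icc θ₀ (θ₀ + δ), lam = Complex.exp (θ * Complex.I))
    (ρ : Matrix (Fin d) (Fin d) ℂ) (hρ : IsState ρ) :
    traceDist ρ (U * ρ * Uᴴ) ≤ Real.sin (δ / 2) := by
  open scoped Matrix.Norms.L2Operator in
  exact (traceDist_conj_le_norm_sub_algebraMap hU hρ _).trans
    (norm_sub_algebraMap_le_sin_of_spectrum_subset_arc (isStarNormal_of_mem_unitary hU) hδ0 hδπ
      hspec)
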